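/- arXiv:2110.15397 — 3 statements merged into one kernel-verified Lean document; each statement's English description precedes it below -/
import Mathlib

section
/- For every real number z, exp(-z) - 1 + z ≥ z² / (2 + |z|). -/
/-!
For `z ≤ 0` the bound follows from `exp x ≥ 1 + x + x²/2` with `x = -z`, since
`z² / (2 + |z|) ≤ z² / 2`. For `z ≥ 0` it is equivalent to `(2 + z) e^{-z} ≥ 2 - z`, and the
difference of the two sides vanishes at `0` and has derivative `1 - (1 + t) e^{-t} ≥ 0`.
-/

open Real

theorem two_sub_le_two_add_mul_exp_neg {x : ℝ} (hx : 0 ≤ x) : 2 - x ≤ (2 + x) * exp (-x) := by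
  let g : ℝ → ℝ := fun t => (2 + t) * exp (-t) - (2 - t)
  have hg : ∀ t, HasDerivAt g (1 - (1 + t) * exp (-t)) t := fun t => by
    have h := (((hasDerivAt_id' t).const_add 2).mul (hasDerivAt_neg t).exp).sub
      ((hasDerivAt_id' t).const_sub 2)
    exact h.congr_deriv (by ring)
  have hg' : ∀ t, 0 ≤ 1 - (1 + t) * exp (-t) := fun t => by
    have h := mul_le_mul_of_nonneg_right (add_one_le_exp t) (exp_pos (-t)).le
    rw [← exp_add, add_neg_cancel, exp_zero] at h
    linarith
  have h := monotone_of_hasDerivAt_nonneg hg hg' hx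
  simp only [g, add_zero, neg_zero, exp_zero, mul_one, sub_zero, sub_self] at h
  linarith

theorem exp_neg_sub_one_add_ge (z : ℝ) :
    Real.exp (-z) - 1 + z ≥ z ^ 2 / (2 + |z|) := by
  rcases le_total 0 z with hz | hz
  · rw [abs_of_nonneg hz, ge_iff_le, div_le_iff₀ (by positivity)]
    linarith [two_sub_le_two_add_mul_exp_neg hz]
  · have hquad := quadratic_le_exp_of_nonneg (neg_nonneg.mpr hz)
    calc z ^ 2 / (2 + |z|) ≤ z ^ 2 / 2 :=
          div_le_div_of_nonneg_left (sq_nonneg z) two_pos (by linarith [abs_nonneg z])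
      _ ≤ exp (-z) - 1 + z := by linarith [neg_sq z]
end

section
/- With the setup of the truncated exponential family f(x; θ) ∝ exp(⟨θ, Φ(x)⟩) on a compact X ⊂ ℝ^p of positive Lebesgue measure, define L(θ) = E_{f(·;θ*)}[exp(−⟨θ, ϕ(X)⟩)] where ϕ = Φ − E_{U_X}[Φ]. Then for all θ, D(U_X ‖ f(·; θ*−θ)) = E_{U_X}[log(U_X(x)/f(x;θ*))] + log L(θ). In particular, argmin_θ L(θ) = argmin_θ D(U_X ‖ f(·; θ*−θ)). -/
open MeasureTheory

theorem KL_identity_and_argmin (p k : ℕ)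
    (X : Set (Fin p → ℝ)) (hX : IsCompact X) (hXpos : 0 < volume X)
    (Φ : (Fin p → ℝ) → (Fin k → ℝ)) (hΦmeas : Measurable Φ)
    (C : ℝ) (hΦbd : ∀ x ∈ X, ‖Φ x‖ ≤ C)
    (θs : Fin k → ℝ)
    (μ : Measure (Fin p → ℝ)) (hμ : μ = (volume X)⁻¹ • volume.restrict X)
    (ϕ : (Fin p → ℝ) → (Fin k → ℝ)) (hϕ : ϕ = fun x => Φ x - ∫ y, Φ y ∂μ)
    (uX : (Fin p → ℝ) → ℝ) (huX : uX = fun _ => ((volume X).toReal)⁻¹)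
    (f : (Fin k → ℝ) → (Fin p → ℝ) → ℝ)
    (hf : f = fun η x =>
      Real.exp (∑ l, η l * Φ x l) / ∫ y in X, Real.exp (∑ l, η l * Φ y l))
    (L : (Fin k → ℝ) → ℝ)
    (hL : L = fun θ => ∫ x in X, f θs x * Real.exp (-(∑ l, θ l * ϕ x l)))
    (KL : (Fin k → ℝ) → ℝ)
    (hKL : KL = fun θ => ∫ x, Real.log (uX x / f (θs - θ) x) ∂μ) :
    (∀ θ : Fin k → ℝ,
        KL θ = (∫ x, Real.log (uX x / f θs x) ∂μ) + Real.log (L θ)) ∧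
      {θ : Fin k → ℝ | ∀ θ', L θ ≤ L θ'} = {θ : Fin k → ℝ | ∀ θ', KL θ ≤ KL θ'} := by
  classical
  have hXm : MeasurableSet X := hX.isClosed.measurableSet
  have hVne : volume X ≠ 0 := hXpos.ne'
  have hVt : volume X ≠ ⊤ := hX.measure_lt_top.ne
  haveI : Fact (volume X < ⊤) := ⟨hX.measure_lt_top⟩
  set V : ℝ := (volume X).toReal with hVdef
  have hVpos : 0 < V := ENNReal.toReal_pos hVne hVt
  set Z : (Fin k → ℝ) → ℝ :=
    fun η => ∫ y in X, Real.exp (∑ l, η l * Φ y l) with hZ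
  -- measurability of the exponent maps
  have hmeasS : ∀ η : Fin k → ℝ,
      Measurable fun x => (∑ l, η l * Φ x l) := by
    intro η
    exact Finset.measurable_sum _ fun l _ =>
      (measurable_const.mul ((measurable_pi_apply l).comp hΦmeas))
  -- pointwise bound on exponent
  have hexpbd : ∀ η : Fin k → ℝ, ∀ x ∈ X,
      (∑ l, η l * Φ x l) ≤ (∑ l, |η l|) * C := by
    intro η x hx
    rw [Finset.sum_mul]
    refine Finset.sum_le_sum fun l _ => ?_
    have h1 : |Φ x l| ≤ C := by
      have := norm_le_pi_norm (Φ x) l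
      simp only [Real.norm_eq_abs] at this
      exact this.trans (hΦbd x hx)
    calc η l * Φ x l ≤ |η l * Φ x l| := le_abs_self _
      _ = |η l| * |Φ x l| := abs_mul _ _
      _ ≤ |η l| * C := by
          exact mul_le_mul_of_nonneg_left h1 (abs_nonneg _)
  -- integrability of the exponential on X
  have hintZ : ∀ η : Fin k → ℝ,
      IntegrableOn (fun x => Real.exp (∑ l, η l * Φ x l)) X volume := by
    intro η
    refine (integrable_const (Real.exp ((∑ l, |η l|) * C))).mono'
      ((Real.measurable_exp.comp (hmeasS η)).aestronglyMeasurable) ?_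
    rw [ae_restrict_iff' hXm]
    filter_upwards with x hx
    rw [Real.norm_eq_abs, Real.abs_exp]
    exact Real.exp_le_exp.2 (hexpbd η x hx)
  -- positivity of Z
  have hZpos : ∀ η, 0 < Z η := by
    intro η
    rw [hZ]
    rw [setIntegral_pos_iff_support_of_nonneg_ae
      (Filter.Eventually.of_forall fun x => (Real.exp_pos _).le) (hintZ η)]
    have hsupp : Function.support (fun x => Real.exp (∑ l, η l * Φ x l)) ∩ X = X := by
      ext x; simp [Function.support, Real.exp_ne_zero]
    rw [hsupp]; exact hXpos
  -- μ is a probability measure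
  have hμuniv : μ Set.univ = 1 := by
    rw [hμ]
    simp [Measure.restrict_apply, ENNReal.inv_mul_cancel hVne hVt]
  haveI : IsProbabilityMeasure μ := ⟨hμuniv⟩
  -- integrability of Φ w.r.t. μ
  have hΦint : Integrable Φ μ := by
    rw [hμ, integrable_smul_measure (ENNReal.inv_ne_zero.2 hVt) (ENNReal.inv_ne_top.2 hVne)]
    refine (integrable_const C).mono' hΦmeas.aestronglyMeasurable ?_
    rw [ae_restrict_iff' hXm]
    exact Filter.Eventually.of_forall hΦbd
  have hΦlint : ∀ l, Integrable (fun x => Φ x l) μ := by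
    intro l
    exact (ContinuousLinearMap.proj (R := ℝ) (φ := fun _ : Fin k => ℝ) l).integrable_comp hΦint
  set m : Fin k → ℝ := ∫ y, Φ y ∂μ with hmdef
  have hm : ∀ l, m l = ∫ y, Φ y l ∂μ := by
    intro l
    exact ((ContinuousLinearMap.proj (R := ℝ) (φ := fun _ : Fin k => ℝ) l).integral_comp_comm
      hΦint).symm
  have hSint : ∀ η : Fin k → ℝ, Integrable (fun x => ∑ l, η l * Φ x l) μ := by
    intro η
    exact integrable_finset_sum _ fun l _ => (hΦlint l).const_mul _
  have hS : ∀ η : Fin k → ℝ, ∫ x, (∑ l, η l * Φ x l) ∂μ = ∑ l, η l * m l := by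
    intro η
    rw [integral_finset_sum _ fun l _ => (hΦlint l).const_mul _]
    exact Finset.sum_congr rfl fun l _ => by rw [integral_const_mul, hm l]
  -- the KL-type integral in closed form
  have hKLval : ∀ η : Fin k → ℝ,
      ∫ x, Real.log (uX x / f η x) ∂μ
        = Real.log V⁻¹ - ∑ l, η l * m l + Real.log (Z η) := by
    intro η
    have hpt : ∀ x, Real.log (uX x / f η x)
        = Real.log V⁻¹ - (∑ l, η l * Φ x l) + Real.log (Z η) := by
      intro x
      rw [huX, hf]
      simp only
      rw [Real.log_div (inv_ne_zero hVpos.ne')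
        (ne_of_gt (div_pos (Real.exp_pos _) (hZpos η)))]
      rw [Real.log_div (Real.exp_ne_zero _) (hZpos η).ne']
      rw [Real.log_exp]
      ring
    simp only [hpt]
    have hint1 : Integrable (fun x => Real.log V⁻¹ - ∑ l, η l * Φ x l) μ :=
      (integrable_const _).sub (hSint η)
    rw [integral_add hint1 (integrable_const _),
      integral_sub (integrable_const _) (hSint η), hS η]
    simp
  -- L in closed form
  have hLval : ∀ θ : Fin k → ℝ,
      L θ = Real.exp (∑ l, θ l * m l) / Z θs * Z (θs - θ) := by
    intro θ
    rw [hL]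
    have hpt : ∀ x, f θs x * Real.exp (-(∑ l, θ l * ϕ x l))
        = (Real.exp (∑ l, θ l * m l) / Z θs)
            * Real.exp (∑ l, (θs - θ) l * Φ x l) := by
      intro x
      rw [hf, hϕ]
      simp only [Pi.sub_apply]
      have e1 : ∑ l, θ l * (Φ x l - m l)
          = ∑ l, θ l * Φ x l - ∑ l, θ l * m l := by
        simp [mul_sub, Finset.sum_sub_distrib]
      have e2 : ∑ l, (θs l - θ l) * Φ x l
          = ∑ l, θs l * Φ x l - ∑ l, θ l * Φ x l := by
        simp [sub_mul, Finset.sum_sub_distrib]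
      rw [e1, e2, div_mul_eq_mul_div, ← Real.exp_add, div_mul_eq_mul_div,
        ← Real.exp_add]
      congr 2
      ring
    simp only [hpt]
    rw [integral_const_mul]
  have hLpos : ∀ θ, 0 < L θ := by
    intro θ
    rw [hLval θ]
    exact mul_pos (div_pos (Real.exp_pos _) (hZpos θs)) (hZpos (θs - θ))
  -- the identity
  have hid : ∀ θ : Fin k → ℝ,
      KL θ = (∫ x, Real.log (uX x / f θs x) ∂μ) + Real.log (L θ) := by
    intro θ
    rw [hKL]
    simp only
    rw [hKLval (θs - θ), hKLval θs, hLval θ]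
    rw [Real.log_mul (div_pos (Real.exp_pos _) (hZpos θs)).ne' (hZpos (θs - θ)).ne',
      Real.log_div (Real.exp_ne_zero _) (hZpos θs).ne', Real.log_exp]
    have e3 : ∑ l, (θs - θ) l * m l = ∑ l, θs l * m l - ∑ l, θ l * m l := by
      simp [Pi.sub_apply, sub_mul, Finset.sum_sub_distrib]
    rw [e3]
    ring
  refine ⟨hid, ?_⟩
  ext θ
  simp only [Set.mem_setOf_eq]
  constructor
  · intro h θ'
    rw [hid θ, hid θ']
    exact add_le_add_right (Real.log_le_log (hLpos θ) (h θ')) _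
  · intro h θ'
    have := h θ'
    rw [hid θ, hid θ'] at this
    have hlog : Real.log (L θ) ≤ Real.log (L θ') := le_of_add_le_add_left this
    exact (Real.log_le_log_iff (hLpos θ) (hLpos θ')).1 hlog
end

section
/- Let ϕ : X → ℝ^k with ‖ϕ(x)‖_∞ ≤ φ_max and |⟨θ, ϕ(x)⟩| ≤ c for all x and all θ, θ* ∈ Λ. For samples x^{(1)},…,x^{(n)} define L_n(θ) = (1/n)Σ_t exp(−⟨θ, ϕ(x^{(t)})⟩) and the Taylor remainder δL_n(Δ, θ*) = L_n(θ*+Δ) − L_n(θ*) − ⟨∇L_n(θ*), Δ⟩ for Δ = θ − θ* with θ ∈ Λ. Then δL_n(Δ, θ*) ≥ (e^{−c}/(2+2c)) · (1/n) Σ_t ⟨Δ, ϕ(x^{(t)})⟩². -/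
open Finset

lemma key_ineq (z : ℝ) : z^2 / (2 + |z|) ≤ Real.exp (-z) - 1 + z := by
  have h2 : (0:ℝ) < 2 + |z| := by positivity
  rw [div_le_iff₀ h2]
  rcases le_or_gt z 0 with hz | hz
  · rw [abs_of_nonpos hz]
    have he : 1 + (-z) + (-z)^2/2 ≤ Real.exp (-z) := by
      have := Real.sum_le_exp_of_nonneg (x := -z) (by linarith) 3
      simp [Finset.sum_range_succ] at this
      nlinarith [this]
    nlinarith [he, sq_nonneg z, mul_nonneg (mul_nonneg (neg_nonneg.2 hz) (neg_nonneg.2 hz)) (neg_nonneg.2 hz)]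
  · rw [abs_of_pos hz]
    rcases le_or_gt z 1 with hz1 | hz1
    · -- use exp_bound with n = 5
      have hb := Real.exp_bound (x := -z) (by rw [abs_of_nonpos (by linarith)]; linarith) (n := 5) (by norm_num)
      rw [abs_of_nonpos (by linarith : -z ≤ 0)] at hb
      have hsum : ∑ m ∈ range 5, (-z) ^ m / (m.factorial : ℝ)
          = 1 - z + z^2/2 - z^3/6 + z^4/24 := by
        simp [Finset.sum_range_succ, Nat.factorial]
        ring
      rw [hsum] at hb
      have hlow : 1 - z + z^2/2 - z^3/6 + z^4/24 - z^5 * (6 / (120 * 5)) ≤ Real.exp (-z) := by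
        have := (abs_sub_le_iff.1 hb).2
        norm_num [Nat.factorial] at this
        nlinarith [this]
      nlinarith [hlow, pow_nonneg hz.le 3, pow_nonneg hz.le 4, pow_nonneg hz.le 5, sq_nonneg z]
    · rcases le_or_gt z 2 with hz2 | hz2
      · have h1 : 2 - z ≤ Real.exp (-z) * Real.exp 1 := by
          rw [← Real.exp_add]
          have := Real.add_one_le_exp (-z + 1)
          linarith
        have h2' : Real.exp 1 ≤ 2 + z := by
          have := Real.exp_one_lt_d9
          linarith
        have hF : (0:ℝ) < Real.exp (-z) := Real.exp_pos _
        nlinarith [mul_le_mul_of_nonneg_left h2' hF.le, h1]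
      · have hF : (0:ℝ) < Real.exp (-z) := Real.exp_pos _
        nlinarith [hF]

theorem taylor_remainder_lower_bound {α : Type*} (k n : ℕ)
    (x : Fin n → α) (ϕ : α → Fin k → ℝ)
    (c : ℝ) (θ θs : Fin k → ℝ)
    (hθ : ∀ t, |∑ j, θ j * ϕ (x t) j| ≤ c)
    (hθs : ∀ t, |∑ j, θs j * ϕ (x t) j| ≤ c)
    (Ln : (Fin k → ℝ) → ℝ)
    (hLn : Ln = fun η => (1 / (n : ℝ)) * ∑ t, Real.exp (-(∑ j, η j * ϕ (x t) j)))
    (G : Fin k → ℝ)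
    (hG : G = fun j =>
      -(1 / (n : ℝ)) * ∑ t, ϕ (x t) j * Real.exp (-(∑ l, θs l * ϕ (x t) l)))
    (Δ : Fin k → ℝ) (hΔ : Δ = θ - θs) :
    Ln (θs + Δ) - Ln θs - ∑ j, G j * Δ j ≥
      (Real.exp (-c) / (2 + 2 * c)) *
        ((1 / (n : ℝ)) * ∑ t, (∑ j, Δ j * ϕ (x t) j) ^ 2) := by
  rcases Nat.eq_zero_or_pos n with h0 | hn
  · subst h0
    simp [hLn, hG]
  have hc : 0 ≤ c := le_trans (abs_nonneg _) (hθ ⟨0, hn⟩)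
  have hcn : (0:ℝ) < 2 + 2 * c := by linarith
  set S : Fin n → ℝ := fun t => ∑ j, θs j * ϕ (x t) j with hS
  set a : Fin n → ℝ := fun t => ∑ j, Δ j * ϕ (x t) j with ha
  have hsum : ∀ t, ∑ j, (θs + Δ) j * ϕ (x t) j = S t + a t := by
    intro t
    rw [hS, ha, ← Finset.sum_add_distrib]
    exact Finset.sum_congr rfl fun j _ => by simp [add_mul]
  have hGsum : ∑ j, G j * Δ j = -(1 / (n:ℝ)) * ∑ t, a t * Real.exp (-(S t)) := by
    have hab : ∀ (t : Fin n), Real.exp (-(∑ l, θs l * ϕ (x t) l)) = Real.exp (-(S t)) :=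
      fun t => rfl
    calc ∑ j, G j * Δ j
        = ∑ j, ∑ t, (-(1/(n:ℝ)) * (Δ j * (ϕ (x t) j * Real.exp (-(S t))))) := by
          rw [hG]
          refine Finset.sum_congr rfl fun j _ => ?_
          simp only [hab]
          rw [Finset.mul_sum, Finset.sum_mul]
          exact Finset.sum_congr rfl fun t _ => by ring
      _ = ∑ t, ∑ j, (-(1/(n:ℝ)) * (Δ j * (ϕ (x t) j * Real.exp (-(S t))))) := Finset.sum_comm
      _ = -(1 / (n:ℝ)) * ∑ t, a t * Real.exp (-(S t)) := by
          rw [Finset.mul_sum]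
          refine Finset.sum_congr rfl fun t _ => ?_
          have : a t = ∑ j, Δ j * ϕ (x t) j := rfl
          rw [this, Finset.sum_mul, Finset.mul_sum]
          exact Finset.sum_congr rfl fun j _ => by ring
  have ha2c : ∀ t, |a t| ≤ 2 * c := by
    intro t
    have : a t = (∑ j, θ j * ϕ (x t) j) - S t := by
      rw [ha, hS, ← Finset.sum_sub_distrib]
      exact Finset.sum_congr rfl fun j _ => by rw [hΔ]; simp [sub_mul]
    rw [this]
    calc |(∑ j, θ j * ϕ (x t) j) - S t| ≤ |∑ j, θ j * ϕ (x t) j| + |S t| := abs_sub _ _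
      _ ≤ 2 * c := by have := hθ t; have := hθs t; rw [hS]; linarith
  have hterm : ∀ t, Real.exp (-c) / (2 + 2*c) * (a t)^2 ≤
      Real.exp (-(S t + a t)) - Real.exp (-(S t)) + a t * Real.exp (-(S t)) := by
    intro t
    have hES : Real.exp (-c) ≤ Real.exp (-(S t)) := by
      apply Real.exp_le_exp.2
      have hSt : S t = ∑ j, θs j * ϕ (x t) j := rfl
      have := (abs_le.1 (hθs t)).2
      rw [hSt]
      linarith
    have hkey : (a t)^2 / (2 + 2*c) ≤ Real.exp (-(a t)) - 1 + a t := by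
      refine le_trans ?_ (key_ineq (a t))
      apply div_le_div_of_nonneg_left (sq_nonneg _) (by positivity)
      linarith [ha2c t]
    have hfac : Real.exp (-(S t + a t)) - Real.exp (-(S t)) + a t * Real.exp (-(S t))
        = Real.exp (-(S t)) * (Real.exp (-(a t)) - 1 + a t) := by
      rw [neg_add, Real.exp_add]; ring
    rw [hfac]
    have h1 : Real.exp (-c) * ((a t)^2 / (2 + 2*c)) ≤
        Real.exp (-(S t)) * (Real.exp (-(a t)) - 1 + a t) := by
      apply mul_le_mul hES hkey (by positivity) (Real.exp_pos _).le
    calc Real.exp (-c) / (2 + 2*c) * (a t)^2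
        = Real.exp (-c) * ((a t)^2 / (2 + 2*c)) := by ring
      _ ≤ _ := h1
  have hmain : (1 / (n:ℝ)) * ∑ t, (Real.exp (-c) / (2 + 2*c) * (a t)^2) ≤
      (1 / (n:ℝ)) * ∑ t, (Real.exp (-(S t + a t)) - Real.exp (-(S t)) + a t * Real.exp (-(S t))) := by
    apply mul_le_mul_of_nonneg_left (Finset.sum_le_sum fun t _ => hterm t) (by positivity)
  rw [ge_iff_le, hLn, hGsum]
  simp only
  calc Real.exp (-c) / (2 + 2 * c) * (1 / (n:ℝ) * ∑ t, (a t)^2)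
      = (1 / (n:ℝ)) * ∑ t, (Real.exp (-c) / (2 + 2*c) * (a t)^2) := by
        simp only [Finset.mul_sum]
        exact Finset.sum_congr rfl fun t _ => by ring
    _ ≤ (1 / (n:ℝ)) * ∑ t, (Real.exp (-(S t + a t)) - Real.exp (-(S t)) + a t * Real.exp (-(S t))) := hmain
    _ = (1 / (n:ℝ)) * ∑ t, Real.exp (-(∑ j, (θs + Δ) j * ϕ (x t) j)) -
          (1 / (n:ℝ)) * ∑ t, Real.exp (-(∑ j, θs j * ϕ (x t) j)) -
          -(1 / (n:ℝ)) * ∑ t, a t * Real.exp (-(S t)) := by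
        have hSe : ∀ t : Fin n, Real.exp (-(∑ j, θs j * ϕ (x t) j)) = Real.exp (-(S t)) :=
          fun t => rfl
        simp only [hsum, hSe]
        rw [Finset.sum_add_distrib, Finset.sum_sub_distrib]
        ring
end
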